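/- arXiv:1709.03424 — 2 statements merged into one kernel-verified Lean document; each statement's English description precedes it below -/
import Mathlib

section
/- Let m, n, w, d be natural numbers with 1 ≤ w and w ∣ m. Then (Nat.choose m w)^n · B(m·n, n·w, d) ≤ (Nat.choose (m·n) (n·w)) · A(m, n, w, d), and (m/w)^(n·w) · A(m, n, w, d) ≤ (Nat.choose m w)^n · C(m/w, n·w, d). -/
open Finset

/-- Total Hamming distance between two words in `J(m,w)^n`:
the number of positions (among all `m·n` entries) in which they differ. -/
def arrDist {m n : ℕ} (X Y : Fin n → Fin m → ZMod 2) : ℕ :=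
  ∑ k, hammingDist (X k) (Y k)

/-- `C` is a constant-weight array code in `J(m,w)^n` with minimum distance `2d`. -/
def isCWAC (m n w d : ℕ) (C : Finset (Fin n → Fin m → ZMod 2)) : Prop :=
  C.Nonempty ∧ (∀ X ∈ C, ∀ k, hammingNorm (X k) = w) ∧
    ∀ X ∈ C, ∀ Y ∈ C, X ≠ Y → 2 * d ≤ arrDist X Y

/-- Maximum cardinality of a CWAC in `J(m,w)^n` with minimum Hamming distance `2d`. -/
noncomputable def Amax (m n w d : ℕ) : ℕ :=
  sSup { c | ∃ C : Finset (Fin n → Fin m → ZMod 2), isCWAC m n w d C ∧ C.card = c }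

/-- Maximum cardinality of an anticode in `J(m,w)^n` with diameter `2δ`. -/
noncomputable def alphaMax (m n w δ : ℕ) : ℕ :=
  sSup { c | ∃ C : Finset (Fin n → Fin m → ZMod 2), C.Nonempty ∧
    (∀ X ∈ C, ∀ k, hammingNorm (X k) = w) ∧
    (∀ X ∈ C, ∀ Y ∈ C, arrDist X Y ≤ 2 * δ) ∧ C.card = c }

/-- Maximum cardinality of a binary constant-weight code in `J(n,w)` with
minimum Hamming distance `2d`. -/
noncomputable def Bmax (n w d : ℕ) : ℕ :=
  sSup { c | ∃ C : Finset (Fin n → ZMod 2), C.Nonempty ∧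
    (∀ x ∈ C, hammingNorm x = w) ∧
    (∀ x ∈ C, ∀ y ∈ C, x ≠ y → 2 * d ≤ hammingDist x y) ∧ C.card = c }

/-- Maximum cardinality of a nonrestricted `q`-ary code of length `n` with
minimum Hamming distance `d`. -/
noncomputable def Cmax (q n d : ℕ) : ℕ :=
  sSup { c | ∃ C : Finset (Fin n → Fin q), C.Nonempty ∧
    (∀ x ∈ C, ∀ y ∈ C, x ≠ y → d ≤ hammingDist x y) ∧ C.card = c }

/-- `ν(i)`: the number of vectors of weight `u` at Hamming distance `i` from a
fixed vector of weight `w` in `GF(2)^m`. -/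
def nuF (m w u : ℕ) (i : ℕ) : ℕ :=
  if (u + w - i) % 2 = 0 ∧ i ≤ u + w ∧ w ≤ u + i then
    Nat.choose w ((u + w - i) / 2) * Nat.choose (m - w) ((u + i - w) / 2)
  else 0

/-! Both bounds are Bassalygo–Elias averaging arguments over coordinate permutations.
Two binary vectors of the same weight `k` on `N` coordinates are carried into each other by
exactly `N! / C(N, k)` permutations. For the first bound, permuting the `m·n` coordinates of an
optimal code in `J(m·n, n·w)` and keeping the words that lie in `J(m,w)^n` gives a CWAC, and
averaging over all permutations gives the bound. For the second, a `q`-ary word of length `n·w`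
(`w·q = m`) is one-hot encoded row by row into `J(m,w)^n`, which doubles distances; permuting the
rows of an optimal CWAC independently and pulling back through the encoding gives `q`-ary codes of
distance `d`, and averaging over `(Fin n → Perm (Fin m))` gives the bound. -/

open Function Equiv
open scoped Nat

section Hamming
variable {ι κ γ β : Type*} [Fintype ι] [Fintype κ] [Fintype γ] [DecidableEq β]

theorem hammingDist_comp_equiv (e : ι ≃ κ) (x y : κ → β) :
    hammingDist (x ∘ e) (y ∘ e) = hammingDist x y :=
  card_equiv e fun i => by simp

theorem hammingNorm_comp_equiv [Zero β] (e : ι ≃ κ) (x : κ → β) :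
    hammingNorm (x ∘ e) = hammingNorm x := by
  simpa using hammingDist_comp_equiv e x 0

theorem hammingDist_uncurry (x y : κ → γ → β) :
    hammingDist (uncurry x) (uncurry y) = ∑ k, hammingDist (x k) (y k) := by
  simp only [hammingDist, card_filter, Fintype.sum_prod_type, uncurry_apply_pair]
  rfl

theorem hammingNorm_uncurry [Zero β] (x : κ → γ → β) :
    hammingNorm (uncurry x) = ∑ k, hammingNorm (x k) := by
  simp only [← hammingDist_zero_right]
  exact hammingDist_uncurry x 0

variable [DecidableEq κ]

theorem hammingNorm_single [Zero β] (k : κ) {b : β} (hb : b ≠ 0) :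
    hammingNorm (Pi.single k b : κ → β) = 1 := by
  rw [hammingNorm, card_eq_one]
  exact ⟨k, by ext; simp [Pi.single_apply, hb]⟩

theorem hammingDist_single_single [Zero β] (k l : κ) {b : β} (hb : b ≠ 0) :
    hammingDist (Pi.single k b : κ → β) (Pi.single l b) = if k = l then 0 else 2 := by
  split_ifs with h
  · simp [h]
  rw [hammingDist, ← card_pair h]
  congr 1
  ext i
  by_cases hk : i = k <;> by_cases hl : i = l <;> simp_all [Pi.single_apply, eq_comm]

end Hamming

section PermCount
variable {α β : Type*} [Fintype α]

theorem ZMod.two_eq_iff {u v : ZMod 2} : u = v ↔ (u = 0 ↔ v = 0) := by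
  revert u v; decide

theorem exists_perm_comp_eq_of_hammingNorm_eq {x y : α → ZMod 2}
    (h : hammingNorm x = hammingNorm y) : ∃ τ : Perm α, x ∘ τ = y := by
  have hcard : Fintype.card {a // y a ≠ 0} = Fintype.card {a // x a ≠ 0} := by
    simpa only [Fintype.card_subtype, hammingNorm] using h.symm
  let e := Fintype.equivOfCardEq hcard
  refine ⟨e.extendSubtype, funext fun a => ZMod.two_eq_iff.2 ?_⟩
  by_cases ha : y a ≠ 0
  · simp [ha, e.extendSubtype_mem a ha]
  · have := e.extendSubtype_not_mem a ha
    simp_all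

variable [DecidableEq α]

theorem card_filter_comp_eq_of_comp_eq [DecidableEq β] {x y : α → β} (τ : Perm α)
    (hτ : x ∘ τ = y) : #{σ : Perm α | x ∘ σ = y} = #{σ : Perm α | x ∘ σ = x} :=
  card_equiv (Equiv.mulRight τ⁻¹) fun σ => by
    subst hτ
    simp only [mem_filter, mem_univ, true_and, coe_mulRight, Perm.coe_mul, funext_iff,
      comp_apply]
    exact ⟨fun h a => by simpa using h (τ⁻¹ a), fun h a => by simpa using h (τ a)⟩

theorem card_filter_hammingNorm_eq (k : ℕ) :
    #{y : α → ZMod 2 | hammingNorm y = k} = (Fintype.card α).choose k := by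
  rw [← Finset.card_univ, ← card_powersetCard]
  refine card_nbij' (fun y => ({a | y a ≠ 0} : Finset α)) (fun s a => if a ∈ s then 1 else 0)
    (fun y hy => by simpa [hammingNorm] using hy) (fun s hs => ?_) (fun y _ => ?_)
    (fun s _ => by ext; simp)
  · simp only [coe_filter, mem_univ, true_and, Set.mem_ofPred_eq, mem_coe, mem_powersetCard] at hs ⊢
    simpa [hammingNorm] using hs.2
  · funext a
    exact ZMod.two_eq_iff.2 (by simp)

theorem card_filter_comp_eq_mul_choose {x y : α → ZMod 2} (h : hammingNorm x = hammingNorm y) :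
    #{σ : Perm α | x ∘ σ = y} * (Fintype.card α).choose (hammingNorm x) = (Fintype.card α)! := by
  obtain ⟨τ, hτ⟩ := exists_perm_comp_eq_of_hammingNorm_eq h
  have hfiber : ∀ z ∈ ({z | hammingNorm z = hammingNorm x} : Finset (α → ZMod 2)),
      #{σ : Perm α | x ∘ σ = z} = #{σ : Perm α | x ∘ σ = x} := fun z hz => by
    obtain ⟨ρ, hρ⟩ := exists_perm_comp_eq_of_hammingNorm_eq (mem_filter.1 hz).2.symm
    exact card_filter_comp_eq_of_comp_eq ρ hρ
  calc #{σ : Perm α | x ∘ σ = y} * (Fintype.card α).choose (hammingNorm x)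
      = ∑ z ∈ {z | hammingNorm z = hammingNorm x}, #{σ : Perm α | x ∘ σ = z} := by
        rw [sum_congr rfl hfiber, sum_const, card_filter_hammingNorm_eq, smul_eq_mul, mul_comm,
          card_filter_comp_eq_of_comp_eq τ hτ]
    _ = Fintype.card (Perm α) :=
        (card_eq_sum_card_fiberwise fun σ _ => by simp [hammingNorm_comp_equiv]).symm
    _ = (Fintype.card α)! := Fintype.card_perm

theorem card_filter_forall_comp_eq_mul_choose_pow {κ : Type*} [Fintype κ] [DecidableEq κ]
    {w : ℕ} {X Y : κ → α → ZMod 2} (hX : ∀ k, hammingNorm (X k) = w)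
    (hY : ∀ k, hammingNorm (Y k) = w) :
    #{g : κ → Perm α | ∀ k, X k ∘ g k = Y k} * (Fintype.card α).choose w ^ Fintype.card κ
      = (Fintype.card α)! ^ Fintype.card κ := by
  have hpi : ({g : κ → Perm α | ∀ k, X k ∘ g k = Y k} : Finset _)
      = Fintype.piFinset fun k => {σ : Perm α | X k ∘ σ = Y k} := by
    ext g
    simp
  rw [hpi, Fintype.card_piFinset, ← Finset.card_univ (α := κ), prod_mul_pow_card, ← prod_const]
  refine prod_congr rfl fun k _ => ?_
  rw [← hX k]
  exact card_filter_comp_eq_mul_choose ((hX k).trans (hY k).symm)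

end PermCount

theorem card_le_mul_of_card_filter_mul_eq {G ι : Type*} [Fintype G] [Nonempty G]
    {r : ι → G → Prop} [∀ i g, Decidable (r i g)] {s : Finset ι} {N M : ℕ}
    (hN : ∀ i ∈ s, #{g | r i g} * N = Fintype.card G) (hM : ∀ g, #{i ∈ s | r i g} ≤ M) :
    #s ≤ N * M := by
  refine Nat.le_of_mul_le_mul_left ?_ (Fintype.card_pos (α := G))
  calc Fintype.card G * #s = (∑ i ∈ s, #{g | r i g}) * N := by
        rw [sum_mul, sum_congr rfl hN, sum_const, smul_eq_mul, mul_comm]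
    _ = (∑ g, #{i ∈ s | r i g}) * N := by
        simp only [card_filter]
        rw [sum_comm]
    _ ≤ (∑ _g : G, M) * N := by gcongr with g; exact hM g
    _ = Fintype.card G * (N * M) := by
        rw [sum_const, smul_eq_mul, Finset.card_univ]
        ring

theorem Nat.sSup_eq_zero_or_mem {S : Set ℕ} (hS : BddAbove S) : sSup S = 0 ∨ sSup S ∈ S := by
  obtain rfl | hne := S.eq_empty_or_nonempty
  · simp
  · exact .inr (Nat.sSup_mem hne hS)

theorem bddAbove_of_forall_exists_card {α : Type*} [Fintype α] {S : Set ℕ}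
    (h : ∀ c ∈ S, ∃ C : Finset α, #C = c) : BddAbove S :=
  ⟨Fintype.card α, fun c hc => by obtain ⟨C, rfl⟩ := h c hc; exact card_le_univ C⟩

theorem Bmax_eq_zero_or_exists (n w d : ℕ) :
    Bmax n w d = 0 ∨ ∃ B : Finset (Fin n → ZMod 2), (∀ x ∈ B, hammingNorm x = w) ∧
      (∀ x ∈ B, ∀ y ∈ B, x ≠ y → 2 * d ≤ hammingDist x y) ∧ #B = Bmax n w d := by
  unfold Bmax
  refine (Nat.sSup_eq_zero_or_mem ?_).imp_right fun ⟨B, _, hw, hd, hB⟩ => ⟨B, hw, hd, hB⟩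
  exact bddAbove_of_forall_exists_card fun _ ⟨B, _, _, _, hB⟩ => ⟨B, hB⟩

theorem Amax_eq_zero_or_exists (m n w d : ℕ) :
    Amax m n w d = 0 ∨ ∃ C : Finset (Fin n → Fin m → ZMod 2),
      (∀ X ∈ C, ∀ k, hammingNorm (X k) = w) ∧ (∀ X ∈ C, ∀ Y ∈ C, X ≠ Y → 2 * d ≤ arrDist X Y) ∧ #C = Amax m n w d := by
  unfold Amax
  refine (Nat.sSup_eq_zero_or_mem ?_).imp_right fun ⟨C, ⟨_, hw, hd⟩, hC⟩ => ⟨C, hw, hd, hC⟩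
  exact bddAbove_of_forall_exists_card fun _ ⟨C, _, hC⟩ => ⟨C, hC⟩

section Codes
variable {m n w d q : ℕ}

theorem card_le_Amax {C : Finset (Fin n → Fin m → ZMod 2)}
    (hw : ∀ X ∈ C, ∀ k, hammingNorm (X k) = w)
    (hd : ∀ X ∈ C, ∀ Y ∈ C, X ≠ Y → 2 * d ≤ arrDist X Y) : #C ≤ Amax m n w d := by
  obtain rfl | hne := C.eq_empty_or_nonempty
  · simp
  exact le_csSup (bddAbove_of_forall_exists_card fun _ ⟨C, _, hC⟩ => ⟨C, hC⟩)
    ⟨C, ⟨hne, hw, hd⟩, rfl⟩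

theorem card_le_Cmax {C : Finset (Fin n → Fin q)}
    (hd : ∀ x ∈ C, ∀ y ∈ C, x ≠ y → d ≤ hammingDist x y) : #C ≤ Cmax q n d := by
  obtain rfl | hne := C.eq_empty_or_nonempty
  · simp
  exact le_csSup (bddAbove_of_forall_exists_card fun _ ⟨C, _, _, hC⟩ => ⟨C, hC⟩)
    ⟨C, hne, hd, rfl⟩

end Codes

section OneHot
variable {κ β : Type*} [Fintype κ] [Fintype β] [DecidableEq β]

def oneHot (f : κ → β) : κ × β → ZMod 2 :=
  uncurry fun k => Pi.single (f k) 1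

theorem hammingNorm_oneHot (f : κ → β) : hammingNorm (oneHot f) = Fintype.card κ := by
  simp [oneHot, hammingNorm_uncurry, hammingNorm_single]

theorem hammingDist_oneHot (f g : κ → β) :
    hammingDist (oneHot f) (oneHot g) = 2 * hammingDist f g := by
  rw [oneHot, oneHot, hammingDist_uncurry, hammingDist, card_filter, mul_sum]
  exact sum_congr rfl fun k _ => by
    rw [hammingDist_single_single _ _ one_ne_zero]
    split_ifs <;> simp_all

end OneHot

section Arrays
variable {m n w d q : ℕ}

def constWeightArrays (m n w : ℕ) : Finset (Fin n → Fin m → ZMod 2) :=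
  {X | ∀ k, hammingNorm (X k) = w}

theorem card_constWeightArrays : #(constWeightArrays m n w) = m.choose w ^ n := by
  have : constWeightArrays m n w = Fintype.piFinset fun _ => {x | hammingNorm x = w} := by
    ext X
    simp [constWeightArrays]
  simp [this, card_filter_hammingNorm_eq]

theorem arrDist_eq_hammingDist_uncurry (X Y : Fin n → Fin m → ZMod 2) :
    arrDist X Y = hammingDist (uncurry X) (uncurry Y) :=
  (hammingDist_uncurry X Y).symm

theorem arrDist_comp_perm (g : Fin n → Perm (Fin m)) (X Y : Fin n → Fin m → ZMod 2) :
    arrDist (fun k => X k ∘ g k) (fun k => Y k ∘ g k) = arrDist X Y :=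
  sum_congr rfl fun k _ => hammingDist_comp_equiv (g k) (X k) (Y k)

def oneHotArray (e : Fin w × Fin q ≃ Fin m) (f : Fin (n * w) → Fin q) :
    Fin n → Fin m → ZMod 2 :=
  fun k => oneHot (fun b => f (finProdFinEquiv (k, b))) ∘ e.symm

theorem hammingNorm_oneHotArray (e : Fin w × Fin q ≃ Fin m) (f : Fin (n * w) → Fin q)
    (k : Fin n) : hammingNorm (oneHotArray e f k) = w := by
  simp [oneHotArray, hammingNorm_comp_equiv, hammingNorm_oneHot]

theorem arrDist_oneHotArray (e : Fin w × Fin q ≃ Fin m) (f g : Fin (n * w) → Fin q) :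
    arrDist (oneHotArray e f) (oneHotArray e g) = 2 * hammingDist f g := by
  simp only [arrDist, oneHotArray, hammingDist_comp_equiv, hammingDist_oneHot, ← mul_sum,
    ← hammingDist_uncurry]
  exact congrArg (2 * ·) (hammingDist_comp_equiv finProdFinEquiv f g)

end Arrays

section Bounds
variable {m n w d q : ℕ}

theorem card_filter_comp_eq_le_Amax {κ : Type*} [Fintype κ] (ι : Fin n × Fin m ≃ κ)
    {B : Finset (κ → ZMod 2)} (hd : ∀ x ∈ B, ∀ y ∈ B, x ≠ y → 2 * d ≤ hammingDist x y)
    (σ : Perm κ) :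
    #{p ∈ B ×ˢ constWeightArrays m n w | p.1 ∘ σ = uncurry p.2 ∘ ι.symm} ≤ Amax m n w d := by
  set F := {p ∈ B ×ˢ constWeightArrays m n w | p.1 ∘ σ = uncurry p.2 ∘ ι.symm}
  have hF : ∀ p ∈ F, (p.1 ∈ B ∧ ∀ k, hammingNorm (p.2 k) = w) ∧ p.1 ∘ σ = uncurry p.2 ∘ ι.symm :=
    fun p hp => by simpa [F, constWeightArrays] using hp
  have hinj : Set.InjOn Prod.snd (F : Set ((κ → ZMod 2) × (Fin n → Fin m → ZMod 2))) :=
    fun p hp p' hp' h => Prod.ext (σ.surjective.injective_comp_right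
      (by rw [(hF p hp).2, (hF p' hp').2, h] : p.1 ∘ σ = p'.1 ∘ σ)) h
  rw [← card_image_of_injOn hinj]
  refine card_le_Amax (fun X hX => ?_) (fun X hX Y hY hXY => ?_)
  · obtain ⟨p, hp, rfl⟩ := mem_image.1 hX
    exact (hF p hp).1.2
  obtain ⟨p, hp, rfl⟩ := mem_image.1 hX
  obtain ⟨p', hp', rfl⟩ := mem_image.1 hY
  have hne : p.1 ≠ p'.1 := fun h => hXY <| uncurry_injective <|
    ι.symm.surjective.injective_comp_right
      (by rw [← (hF p hp).2, ← (hF p' hp').2, h] : uncurry p.2 ∘ ι.symm = uncurry p'.2 ∘ ι.symm)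
  calc 2 * d ≤ hammingDist p.1 p'.1 := hd _ (hF p hp).1.1 _ (hF p' hp').1.1 hne
    _ = hammingDist (p.1 ∘ σ) (p'.1 ∘ σ) := (hammingDist_comp_equiv σ _ _).symm
    _ = arrDist p.2 p'.2 := by
      rw [(hF p hp).2, (hF p' hp').2, hammingDist_comp_equiv, arrDist_eq_hammingDist_uncurry]

theorem card_mul_choose_pow_le_mul_Amax {B : Finset (Fin (m * n) → ZMod 2)}
    (hw : ∀ x ∈ B, hammingNorm x = n * w)
    (hd : ∀ x ∈ B, ∀ y ∈ B, x ≠ y → 2 * d ≤ hammingDist x y) :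
    #B * m.choose w ^ n ≤ (m * n).choose (n * w) * Amax m n w d := by
  let ι : Fin n × Fin m ≃ Fin (m * n) := Fintype.equivOfCardEq (by simp [mul_comm])
  rw [← card_constWeightArrays, ← card_product]
  refine card_le_mul_of_card_filter_mul_eq (G := Perm (Fin (m * n)))
    (r := fun p σ => p.1 ∘ σ = uncurry p.2 ∘ ι.symm) (fun p hp => ?_)
    (card_filter_comp_eq_le_Amax ι hd)
  obtain ⟨hpB, hpw⟩ : p.1 ∈ B ∧ ∀ k, hammingNorm (p.2 k) = w := by
    simpa [constWeightArrays] using hp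
  have hflat : hammingNorm (uncurry p.2 ∘ ι.symm) = n * w := by
    simp [hammingNorm_comp_equiv, hammingNorm_uncurry, hpw]
  simpa [hw _ hpB, Fintype.card_perm] using
    card_filter_comp_eq_mul_choose ((hw _ hpB).trans hflat.symm)

theorem card_filter_comp_eq_oneHotArray_le_Cmax (e : Fin w × Fin q ≃ Fin m)
    {C : Finset (Fin n → Fin m → ZMod 2)} (hd : ∀ X ∈ C, ∀ Y ∈ C, X ≠ Y → 2 * d ≤ arrDist X Y)
    (g : Fin n → Perm (Fin m)) :
    #{p ∈ C ×ˢ (univ : Finset (Fin (n * w) → Fin q)) | ∀ k, p.1 k ∘ g k = oneHotArray e p.2 k}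
      ≤ Cmax q (n * w) d := by
  set F := {p ∈ C ×ˢ (univ : Finset (Fin (n * w) → Fin q)) |
    ∀ k, p.1 k ∘ g k = oneHotArray e p.2 k}
  have hF : ∀ p ∈ F, p.1 ∈ C ∧ (fun k => p.1 k ∘ g k) = oneHotArray e p.2 :=
    fun p hp => by simpa [F, funext_iff] using hp
  have hinj : Set.InjOn Prod.snd (F : Set ((Fin n → Fin m → ZMod 2) × (Fin (n * w) → Fin q))) :=
    fun p hp p' hp' h => Prod.ext (funext fun k => (g k).surjective.injective_comp_right
      (by rw [congrFun (hF p hp).2 k, congrFun (hF p' hp').2 k, h] : p.1 k ∘ g k = p'.1 k ∘ g k)) h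
  rw [← card_image_of_injOn hinj]
  refine card_le_Cmax fun f hf f' hf' hff' => ?_
  obtain ⟨p, hp, rfl⟩ := mem_image.1 hf
  obtain ⟨p', hp', rfl⟩ := mem_image.1 hf'
  have hdist : arrDist p.1 p'.1 = 2 * hammingDist p.2 p'.2 := by
    rw [← arrDist_comp_perm g, (hF p hp).2, (hF p' hp').2, arrDist_oneHotArray]
  have hne : p.1 ≠ p'.1 := fun h => hff' <| by
    simpa [h, arrDist, hammingDist_self] using hdist
  have hfar := hd _ (hF p hp).1 _ (hF p' hp').1 hne
  omega

theorem card_mul_pow_le_choose_pow_mul_Cmax (hwq : w * q = m)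
    {C : Finset (Fin n → Fin m → ZMod 2)} (hw : ∀ X ∈ C, ∀ k, hammingNorm (X k) = w)
    (hd : ∀ X ∈ C, ∀ Y ∈ C, X ≠ Y → 2 * d ≤ arrDist X Y) :
    #C * q ^ (n * w) ≤ m.choose w ^ n * Cmax q (n * w) d := by
  let e : Fin w × Fin q ≃ Fin m := finProdFinEquiv.trans (finCongr hwq)
  have hcard : #(C ×ˢ (univ : Finset (Fin (n * w) → Fin q))) = #C * q ^ (n * w) := by simp
  rw [← hcard]
  refine card_le_mul_of_card_filter_mul_eq (G := Fin n → Perm (Fin m))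
    (r := fun p g => ∀ k, p.1 k ∘ g k = oneHotArray e p.2 k) (fun p hp => ?_)
    (card_filter_comp_eq_oneHotArray_le_Cmax e hd)
  have hcount := card_filter_forall_comp_eq_mul_choose_pow
    (hw _ (mem_product.1 hp).1) (hammingNorm_oneHotArray e p.2)
  simp only [Fintype.card_fin] at hcount
  convert hcount using 4
  simp [Fintype.card_perm]

end Bounds

theorem bassalygo_elias_CWAC_special_general (m n w d : ℕ) (hwm : w ∣ m) :
    ((Nat.choose m w) ^ n * Bmax (m * n) (n * w) d
        ≤ Nat.choose (m * n) (n * w) * Amax m n w d) ∧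
    ((m / w) ^ (n * w) * Amax m n w d
        ≤ (Nat.choose m w) ^ n * Cmax (m / w) (n * w) d) := by
  constructor
  · obtain h | ⟨B, hw, hd, hB⟩ := Bmax_eq_zero_or_exists (m * n) (n * w) d
    · simp [h]
    · rw [← hB, mul_comm]
      exact card_mul_choose_pow_le_mul_Amax hw hd
  · obtain h | ⟨C, hw, hd, hC⟩ := Amax_eq_zero_or_exists m n w d
    · simp [h]
    · rw [← hC, mul_comm]
      exact card_mul_pow_le_choose_pow_mul_Cmax (Nat.mul_div_cancel' hwm) hw hd

theorem bassalygo_elias_CWAC_special (m n w d : ℕ) (hw : 1 ≤ w) (hwm : w ∣ m) :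
    ((Nat.choose m w) ^ n * Bmax (m * n) (n * w) d
        ≤ Nat.choose (m * n) (n * w) * Amax m n w d) ∧
    ((m / w) ^ (n * w) * Amax m n w d
        ≤ (Nat.choose m w) ^ n * Cmax (m / w) (n * w) d) :=
  bassalygo_elias_CWAC_special_general m n w d hwm
end

section
/- Let m, n, w, d be natural numbers with 1 ≤ w ≤ m−1 and n ≥ 1, and let 𝒞 ⊆ J(m,w)^n be a constant-weight array code in which any two distinct words have Hamming distance at least 2d. Then there exists an injective map f from 𝒞 into EuclideanSpace ℝ (Fin m × Fin n) such that: (i) ‖f(X)‖ = 1 for every X ∈ 𝒞; (ii) for every X ∈ 𝒞 and every column index k ∈ Fin n, the sum over j ∈ Fin m of the (j,k)-coordinate of f(X) equals 0; and (iii) for all distinct X, Y ∈ 𝒞, the inner product ⟪f(X), f(Y)⟫ ≤ 1 − (d·m)/(n·w·(m−w)). Explicitly, one may take f(X) = (Ω(X) − c)/r, where Ω replaces each binary entry 0 of X by the real number 1 and each entry 1 by −1, c is the constant vector with all m·n coordinates equal to (m−2w)/m, and r = 2·√(n·w·(m−w)/m). -/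
open Finset

/-!
Encode a binary array entrywise by `0 ↦ 1`, `1 ↦ -1`. Two ±1 vectors of length `m` have inner
product `m - 2·dist`, and a column of weight `w` has coordinate sum `m - 2w`. Subtracting the
constant `(m - 2w)/m` from every entry therefore makes all column sums vanish and turns the inner
product of two columns of weight `w` into `4w(m - w)/m - 2·dist`. Summing over the `n` columns and
normalising by `4nw(m - w)/m` gives unit vectors whose inner products are
`1 - m·dist/(2nw(m - w))`, which is at most `1 - dm/(nw(m - w))` at distance `≥ 2d`.
-/

section SignVector

variable {ι : Type*}

def signVec (x : ι → ZMod 2) (j : ι) : ℝ := if x j = 0 then 1 else -1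

lemma signVec_mul_signVec (x y : ι → ZMod 2) (j : ι) :
    signVec x j * signVec y j = if x j = y j then 1 else -1 := by
  unfold signVec
  have h01 : ∀ a : ZMod 2, a = 0 ∨ a = 1 := by decide
  rcases h01 (x j) with h | h <;> rcases h01 (y j) with h' | h' <;> simp [h, h']

lemma signVec_injective : Function.Injective (signVec : (ι → ZMod 2) → ι → ℝ) := by
  intro x y h
  funext j
  have hj := congrFun h j
  have h01 : ∀ a : ZMod 2, a = 0 ∨ a = 1 := by decide
  rcases h01 (x j) with h | h <;> rcases h01 (y j) with h' | h' <;>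
    simp_all [signVec] <;> norm_num at hj

variable [Fintype ι]

lemma sum_ite_one_neg_one (p : ι → Prop) [DecidablePred p] :
    ∑ j, (if p j then (1 : ℝ) else -1) = Fintype.card ι - 2 * #{j | ¬ p j} := by
  have hcard := card_filter_add_card_filter_not (s := univ) p
  rw [card_univ] at hcard
  rw [sum_ite, sum_const, sum_const, nsmul_eq_mul, nsmul_eq_mul, ← hcard]
  push_cast
  ring

lemma sum_signVec (x : ι → ZMod 2) :
    ∑ j, signVec x j = Fintype.card ι - 2 * hammingNorm x :=
  sum_ite_one_neg_one _

lemma sum_signVec_mul_signVec (x y : ι → ZMod 2) :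
    ∑ j, signVec x j * signVec y j = Fintype.card ι - 2 * hammingDist x y := by
  simp only [signVec_mul_signVec]
  exact sum_ite_one_neg_one _

lemma sum_signVec_sub_mul_signVec_sub [Nonempty ι] {w : ℕ} {x y : ι → ZMod 2}
    (hx : hammingNorm x = w) (hy : hammingNorm y = w) :
    let c : ℝ := (Fintype.card ι - 2 * w) / Fintype.card ι
    ∑ j, (signVec x j - c) * (signVec y j - c) =
      4 * w * (Fintype.card ι - w) / Fintype.card ι - 2 * hammingDist x y := by
  intro c
  have hm : (Fintype.card ι : ℝ) ≠ 0 := by positivity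
  have hexpand : ∑ j, (signVec x j - c) * (signVec y j - c) =
      ∑ j, signVec x j * signVec y j - c * ∑ j, signVec x j - c * ∑ j, signVec y j +
        Fintype.card ι * c ^ 2 := by
    rw [show ∑ j, (signVec x j - c) * (signVec y j - c) =
        ∑ j, (signVec x j * signVec y j - c * signVec x j - c * signVec y j + c ^ 2) from
      sum_congr rfl fun j _ => by ring]
    simp only [sum_add_distrib, sum_sub_distrib, ← mul_sum, sum_const, card_univ, nsmul_eq_mul]
  rw [hexpand, sum_signVec_mul_signVec, sum_signVec, sum_signVec, hx, hy]
  simp only [c]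
  field_simp
  ring

end SignVector

section ArrayEmbedding

variable {m n : ℕ}

noncomputable def cwacEmbedding (w : ℕ) (X : Fin n → Fin m → ZMod 2) :
    EuclideanSpace ℝ (Fin m × Fin n) :=
  WithLp.toLp 2 fun p => (signVec (X p.2) p.1 - ((m : ℝ) - 2 * w) / m) /
    (2 * Real.sqrt ((n : ℝ) * w * ((m : ℝ) - w) / m))

lemma cwacEmbedding_apply (w : ℕ) (X : Fin n → Fin m → ZMod 2) (p : Fin m × Fin n) :
    cwacEmbedding w X p = (signVec (X p.2) p.1 - ((m : ℝ) - 2 * w) / m) /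
      (2 * Real.sqrt ((n : ℝ) * w * ((m : ℝ) - w) / m)) :=
  rfl

lemma cast_mul_mul_sub_pos {w : ℕ} (hw : 1 ≤ w) (hwm : w < m) (hn : 1 ≤ n) :
    (0 : ℝ) < n * w * (m - w) := by
  have hn' : (0 : ℝ) < n := by exact_mod_cast hn
  have hw' : (0 : ℝ) < w := by exact_mod_cast hw
  have hmw : (0 : ℝ) < m - w := sub_pos.2 (by exact_mod_cast hwm)
  exact mul_pos (mul_pos hn' hw') hmw

lemma cwac_scale_pos {w : ℕ} (hw : 1 ≤ w) (hwm : w < m) (hn : 1 ≤ n) :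
    (0 : ℝ) < n * w * (m - w) / m :=
  div_pos (cast_mul_mul_sub_pos hw hwm hn) (Nat.cast_pos.2 (by omega))

lemma cwacEmbedding_injective {w : ℕ} (hw : 1 ≤ w) (hwm : w < m) (hn : 1 ≤ n) :
    Function.Injective (cwacEmbedding (m := m) (n := n) w) := by
  have hr : 2 * Real.sqrt ((n : ℝ) * w * ((m : ℝ) - w) / m) ≠ 0 := by
    have := Real.sqrt_pos.2 (cwac_scale_pos hw hwm hn)
    positivity
  intro X Y h
  funext k
  apply signVec_injective
  funext j
  have hjk : cwacEmbedding w X (j, k) = cwacEmbedding w Y (j, k) := by rw [h]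
  rwa [cwacEmbedding_apply, cwacEmbedding_apply, div_left_inj' hr, sub_left_inj] at hjk

lemma sum_cwacEmbedding_column {w : ℕ} (hm : 0 < m) {X : Fin n → Fin m → ZMod 2} (k : Fin n)
    (hX : hammingNorm (X k) = w) :
    ∑ j, cwacEmbedding w X (j, k) = 0 := by
  have hm' : (m : ℝ) ≠ 0 := by positivity
  simp only [cwacEmbedding_apply, ← sum_div, sum_sub_distrib, sum_signVec, hX, sum_const,
    card_univ, Fintype.card_fin, nsmul_eq_mul]
  field_simp
  ring

lemma inner_cwacEmbedding {w : ℕ} (hw : 1 ≤ w) (hwm : w < m) (hn : 1 ≤ n)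
    {X Y : Fin n → Fin m → ZMod 2}
    (hX : ∀ k, hammingNorm (X k) = w) (hY : ∀ k, hammingNorm (Y k) = w) :
    inner ℝ (cwacEmbedding w X) (cwacEmbedding w Y) =
      1 - (arrDist X Y : ℝ) * m / (2 * (n * w * (m - w))) := by
  have : NeZero m := ⟨by omega⟩
  have hs := cwac_scale_pos hw hwm hn
  have hr2 : (2 * Real.sqrt ((n : ℝ) * w * ((m : ℝ) - w) / m)) ^ 2 =
      4 * (n * w * (m - w) / m) := by
    rw [mul_pow, Real.sq_sqrt hs.le]
    norm_num
  have hcol : ∀ k, ∑ j, cwacEmbedding w X (j, k) * cwacEmbedding w Y (j, k) =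
      (4 * w * (m - w) / m - 2 * hammingDist (X k) (Y k)) /
        (2 * Real.sqrt ((n : ℝ) * w * ((m : ℝ) - w) / m)) ^ 2 := by
    intro k
    have hk := sum_signVec_sub_mul_signVec_sub (hX k) (hY k)
    simp only [Fintype.card_fin] at hk
    rw [← hk, sum_div]
    exact sum_congr rfl fun j _ => by rw [cwacEmbedding_apply, cwacEmbedding_apply]; ring
  calc inner ℝ (cwacEmbedding w X) (cwacEmbedding w Y)
      = ∑ k, ∑ j, cwacEmbedding w X (j, k) * cwacEmbedding w Y (j, k) := by
        simp only [PiLp.inner_apply, RCLike.inner_apply, conj_trivial, Fintype.sum_prod_type]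
        rw [sum_comm]
        exact sum_congr rfl fun k _ => sum_congr rfl fun j _ => mul_comm _ _
    _ = (n * (4 * w * (m - w) / m) - 2 * arrDist X Y) / (4 * (n * w * (m - w) / m)) := by
        simp only [hcol, ← sum_div, sum_sub_distrib, ← mul_sum, sum_const, card_univ,
          Fintype.card_fin, nsmul_eq_mul, hr2, arrDist, Nat.cast_sum]
        ring
    _ = 1 - (arrDist X Y : ℝ) * m / (2 * (n * w * (m - w))) := by
        have hm : (0 : ℝ) < m := Nat.cast_pos.2 (by omega)
        have hmw : (0 : ℝ) < m - w := sub_pos.2 (by exact_mod_cast hwm)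
        field_simp
        ring

lemma norm_cwacEmbedding {w : ℕ} (hw : 1 ≤ w) (hwm : w < m) (hn : 1 ≤ n)
    {X : Fin n → Fin m → ZMod 2} (hX : ∀ k, hammingNorm (X k) = w) :
    ‖cwacEmbedding w X‖ = 1 := by
  have hsq := inner_cwacEmbedding hw hwm hn hX hX
  simp only [real_inner_self_eq_norm_sq, arrDist, hammingDist_self, sum_const_zero,
    Nat.cast_zero, zero_mul, zero_div, sub_zero] at hsq
  exact (pow_eq_one_iff_of_nonneg (norm_nonneg _) two_ne_zero).1 hsq

end ArrayEmbedding

theorem CWAC_to_spherical_code (m n w d : ℕ) (hw : 1 ≤ w) (hwm : w < m) (hn : 1 ≤ n)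
    (C : Finset (Fin n → Fin m → ZMod 2))
    (hCw : ∀ X ∈ C, ∀ k, hammingNorm (X k) = w)
    (hCd : ∀ X ∈ C, ∀ Y ∈ C, X ≠ Y → 2 * d ≤ arrDist X Y) :
    ∃ f : (Fin n → Fin m → ZMod 2) → EuclideanSpace ℝ (Fin m × Fin n),
      (∀ X ∈ C, ∀ Y ∈ C, f X = f Y → X = Y) ∧
      (∀ X ∈ C, ‖f X‖ = 1) ∧
      (∀ X ∈ C, ∀ k : Fin n, ∑ j : Fin m, f X (j, k) = 0) ∧
      (∀ X ∈ C, ∀ Y ∈ C, X ≠ Y →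
        (inner ℝ (f X) (f Y) : ℝ) ≤ 1 - ((d : ℝ) * m) / ((n : ℝ) * w * ((m : ℝ) - w))) ∧
      (∀ X, ∀ p : Fin m × Fin n,
        f X p = ((if X p.2 p.1 = 0 then (1 : ℝ) else -1) - ((m : ℝ) - 2 * w) / m) /
          (2 * Real.sqrt ((n : ℝ) * w * ((m : ℝ) - w) / m))) := by
  refine ⟨cwacEmbedding w, fun X _ Y _ h => cwacEmbedding_injective hw hwm hn h,
    fun X hX => norm_cwacEmbedding hw hwm hn (hCw X hX),
    fun X hX k => sum_cwacEmbedding_column (by omega) k (hCw X hX k),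
    fun X hX Y hY hXY => ?_, fun _ _ => rfl⟩
  rw [inner_cwacEmbedding hw hwm hn (hCw X hX) (hCw Y hY)]
  have hD : (2 * d : ℝ) ≤ arrDist X Y := by exact_mod_cast hCd X hX Y hY hXY
  have hpos := cast_mul_mul_sub_pos hw hwm hn
  calc 1 - (arrDist X Y : ℝ) * m / (2 * (n * w * (m - w)))
      ≤ 1 - (2 * d : ℝ) * m / (2 * (n * w * (m - w))) := by gcongr
    _ = 1 - (d : ℝ) * m / (n * w * (m - w)) := by
      rw [mul_assoc (2 : ℝ), mul_div_mul_left _ _ two_ne_zero]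
end
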